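/- For a 1-uniform fusion frame {(W_i, 1)}: {(W_i,1)} is a Riesz decomposition of H if and only if the synthesis operator T_W is one-to-one, if and only if the analysis operator T_W* is onto, if and only if {(W_i,1)} is a fusion Riesz basis for H. -/

import Mathlib

/-!
The frame inequalities say exactly that the analysis operator `T† f = (π_{W_i} f)_i` satisfies
`√A ‖f‖ ≤ ‖T† f‖ ≤ √B ‖f‖`. Being bounded below, `T†` is injective with closed range, so it is
onto iff `(range T†)ᗮ = ker T` vanishes. When `T†` is onto, duality transfers the lower bound
to `T` itself, and restricting `T` to finitely supported sequences gives the Riesz inequalities.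
Conversely, a lower Riesz bound extends by continuity to `C ‖v‖ ≤ ‖T v‖`, so `range T` is closed;
it contains every `W i`, hence is all of `H`, and the same bound forces decompositions to be unique.
-/

open scoped InnerProductSpace

/-- Orthogonal projection onto a complete subspace, as an operator `H →L H`. -/
noncomputable def fusionProj {H : Type*} [NormedAddCommGroup H] [InnerProductSpace ℂ H]
    (K : Submodule ℂ H) [CompleteSpace K] : H →L[ℂ] H :=
  K.subtypeL.comp K.orthogonalProjectionOnto

/-- Fusion Riesz basis (for weight one): dense span and two-sided Riesz inequalities
for all finite sums with `f j ∈ W j`. -/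
def IsFusionRieszBasis {H : Type*} [NormedAddCommGroup H] [InnerProductSpace ℂ H]
    {ι : Type*} (W : ι → Submodule ℂ H) : Prop :=
  (⨆ i, W i).topologicalClosure = ⊤ ∧
  ∃ C D : ℝ, 0 < C ∧ C ≤ D ∧
    ∀ (J : Finset ι) (f : ι → H), (∀ j, f j ∈ W j) →
      C * Real.sqrt (∑ j ∈ J, ‖f j‖ ^ 2) ≤ ‖∑ j ∈ J, f j‖ ∧
        ‖∑ j ∈ J, f j‖ ≤ D * Real.sqrt (∑ j ∈ J, ‖f j‖ ^ 2)

open scoped InnerProduct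

namespace lp

variable {ι : Type*} {G : ι → Type*} [∀ i, NormedAddCommGroup (G i)]

lemma hasSum_norm_sq (v : lp G 2) : HasSum (fun i => ‖v i‖ ^ 2) (‖v‖ ^ 2) := by
  simpa using lp.hasSum_norm (p := 2) (by norm_num) v

lemma norm_sum_single_two [DecidableEq ι] (f : ∀ i, G i) (s : Finset ι) :
    ‖∑ i ∈ s, lp.single 2 i (f i)‖ = √(∑ i ∈ s, ‖f i‖ ^ 2) := by
  rw [eq_comm, Real.sqrt_eq_iff_eq_sq (by positivity) (norm_nonneg _)]
  simpa using (lp.norm_sum_single (p := 2) (by norm_num) f s).symm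

end lp

namespace ContinuousLinearMap

variable {𝕜 E F : Type*} [RCLike 𝕜] [NormedAddCommGroup E] [InnerProductSpace 𝕜 E]
  [NormedAddCommGroup F] [InnerProductSpace 𝕜 F]

lemma antilipschitz_of_mul_norm_le (L : E →L[𝕜] F) {c : ℝ} (hc : 0 < c)
    (h : ∀ x, c * ‖x‖ ≤ ‖L x‖) : AntilipschitzWith (c⁻¹).toNNReal L :=
  L.antilipschitz_of_bound fun x => by
    rw [Real.coe_toNNReal _ (inv_pos.2 hc).le, inv_mul_eq_div, le_div_iff₀ hc, mul_comm]
    exact h x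

variable [CompleteSpace E] [CompleteSpace F]

lemma injective_of_surjective_adjoint {S : E →L[𝕜] F} (h : Function.Surjective (S†)) :
    Function.Injective S := by
  rw [injective_iff_map_eq_zero]
  intro v hv
  obtain ⟨f, rfl⟩ := h v
  rw [← inner_self_eq_zero (𝕜 := 𝕜), adjoint_inner_left, hv, inner_zero_right]

lemma surjective_adjoint_of_injective {S : E →L[𝕜] F} {c : ℝ} (hc : 0 < c)
    (hS : ∀ f, c * ‖f‖ ≤ ‖(S†) f‖) (h : Function.Injective S) :
    Function.Surjective (S†) := by
  have hclosed : IsClosed ((S†).range : Set E) :=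
    ((S†).antilipschitz_of_mul_norm_le hc hS).isClosed_range (S†).uniformContinuous
  have : CompleteSpace (S†).range := hclosed.completeSpace_coe
  have hperp : (S†).rangeᗮ = ⊥ := by
    rw [orthogonal_range, adjoint_adjoint, LinearMap.ker_eq_bot]
    exact h
  exact LinearMap.range_eq_top.1 (Submodule.orthogonal_eq_bot_iff.1 hperp)

lemma mul_norm_le_of_surjective_adjoint {S : E →L[𝕜] F} {c : ℝ} (hc : 0 < c)
    (hS : ∀ f, c * ‖f‖ ≤ ‖(S†) f‖) (h : Function.Surjective (S†)) (v : E) :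
    c * ‖v‖ ≤ ‖S v‖ := by
  obtain ⟨f, rfl⟩ := h v
  rcases (norm_nonneg ((S†) f)).eq_or_lt with hv | hv
  · rw [← hv, mul_zero]
    exact norm_nonneg _
  refine le_of_mul_le_mul_left ?_ hv
  calc ‖(S†) f‖ * (c * ‖(S†) f‖) = c * ‖(S†) f‖ ^ 2 := by ring
    _ = c * RCLike.re ⟪f, S ((S†) f)⟫_𝕜 := by
      rw [← adjoint_inner_left, inner_self_eq_norm_sq]
    _ ≤ c * (‖f‖ * ‖S ((S†) f)‖) :=
      mul_le_mul_of_nonneg_left ((RCLike.re_le_norm _).trans (norm_inner_le_norm _ _)) hc.le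
    _ ≤ ‖(S†) f‖ * ‖S ((S†) f)‖ := by
      rw [← mul_assoc]
      exact mul_le_mul_of_nonneg_right (hS f) (norm_nonneg _)

end ContinuousLinearMap

section FusionFrame

variable {H : Type*} [NormedAddCommGroup H] [InnerProductSpace ℂ H] {ι : Type*}
  {W : ι → Submodule ℂ H}

lemma eq_zero_of_hasSum_zero_of_riesz {C : ℝ} (hC : 0 < C)
    (hriesz : ∀ (J : Finset ι) (f : ι → H), (∀ j, f j ∈ W j) →
      C * √(∑ j ∈ J, ‖f j‖ ^ 2) ≤ ‖∑ j ∈ J, f j‖)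
    {g : ι → H} (hg : ∀ i, g i ∈ W i) (hsum : HasSum g 0) (i : ι) : g i = 0 := by
  have hbound : ∀ J : Finset ι, i ∈ J → C * ‖g i‖ ≤ ‖∑ j ∈ J, g j‖ := fun J hi =>
    calc C * ‖g i‖ = C * √(‖g i‖ ^ 2) := by rw [Real.sqrt_sq (norm_nonneg _)]
      _ ≤ C * √(∑ j ∈ J, ‖g j‖ ^ 2) := by
        gcongr
        exact Finset.single_le_sum (fun j _ => sq_nonneg ‖g j‖) hi
      _ ≤ ‖∑ j ∈ J, g j‖ := hriesz J g hg
  have hle : C * ‖g i‖ ≤ 0 := by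
    simpa using ge_of_tendsto hsum.norm <| (Filter.eventually_ge_atTop {i}).mono
      fun J hJ => hbound J (hJ (Finset.mem_singleton_self i))
  exact norm_le_zero_iff.1 (nonpos_of_mul_nonpos_right hle hC)

variable {T : lp (fun i => W i) 2 →L[ℂ] H}
  (hT : ∀ v : lp (fun i => W i) 2, HasSum (fun i => (v i : H)) (T v))
include hT

lemma synthesis_single [DecidableEq ι] (i : ι) (a : W i) : T (lp.single 2 i a) = a := by
  refine (hT _).unique ?_
  convert hasSum_ite_eq i (a : H) using 2 with j
  by_cases hj : j = i
  · subst hj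
    simp
  · simp [hj]

lemma riesz_bounds_of_synthesis {C D : ℝ} (hT_below : ∀ v, C * ‖v‖ ≤ ‖T v‖) (hT_norm : ‖T‖ ≤ D)
    (J : Finset ι) (f : ι → H) (hf : ∀ j, f j ∈ W j) :
    C * √(∑ j ∈ J, ‖f j‖ ^ 2) ≤ ‖∑ j ∈ J, f j‖ ∧
      ‖∑ j ∈ J, f j‖ ≤ D * √(∑ j ∈ J, ‖f j‖ ^ 2) := by
  classical
  set v : lp (fun i => W i) 2 := ∑ j ∈ J, lp.single 2 j ⟨f j, hf j⟩
  have hTv : T v = ∑ j ∈ J, f j := by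
    simp only [v, map_sum, synthesis_single hT]
  have hv : ‖v‖ = √(∑ j ∈ J, ‖f j‖ ^ 2) :=
    lp.norm_sum_single_two (fun j => (⟨f j, hf j⟩ : W j)) J
  rw [← hTv, ← hv]
  exact ⟨hT_below v, T.le_of_opNorm_le hT_norm v⟩

lemma mul_norm_le_norm_synthesis_of_riesz {C : ℝ}
    (hriesz : ∀ (J : Finset ι) (f : ι → H), (∀ j, f j ∈ W j) →
      C * √(∑ j ∈ J, ‖f j‖ ^ 2) ≤ ‖∑ j ∈ J, f j‖) (v : lp (fun i => W i) 2) :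
    C * ‖v‖ ≤ ‖T v‖ := by
  have hlim : Filter.Tendsto (fun J : Finset ι => C * √(∑ j ∈ J, ‖(v j : H)‖ ^ 2))
      Filter.atTop (nhds (C * ‖v‖)) := by
    have := ((lp.hasSum_norm_sq v).sqrt).const_mul C
    rwa [Real.sqrt_sq (norm_nonneg v)] at this
  exact le_of_tendsto_of_tendsto' hlim (hT v).norm
    fun J => hriesz J (fun i => v i) fun i => (v i).2

lemma injective_synthesis_of_existsUnique_hasSum
    (h : ∀ f : H, ∃! g : ∀ i, W i, HasSum (fun i => (g i : H)) f) : Function.Injective T := by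
  rw [injective_iff_map_eq_zero]
  intro v hv
  have hv_sum : HasSum (fun i => (v i : H)) 0 := hv ▸ hT v
  exact lp.ext ((h 0).unique hv_sum (by simp))

variable [∀ i, CompleteSpace (W i)]

lemma surjective_synthesis_of_dense {C : ℝ} (hC : 0 < C) (hT_below : ∀ v, C * ‖v‖ ≤ ‖T v‖)
    (hdense : (⨆ i, W i).topologicalClosure = ⊤) : Function.Surjective T := by
  classical
  have hclosed : IsClosed (T.range : Set H) :=
    (T.antilipschitz_of_mul_norm_le hC hT_below).isClosed_range T.uniformContinuous
  have hW : (⨆ i, W i) ≤ T.range :=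
    iSup_le fun i w hw => ⟨lp.single 2 i ⟨w, hw⟩, synthesis_single hT i ⟨w, hw⟩⟩
  have htop := Submodule.topologicalClosure_minimal _ hW hclosed
  rw [hdense, top_le_iff] at htop
  exact LinearMap.range_eq_top.1 htop

lemma existsUnique_hasSum_of_isFusionRieszBasis (h : IsFusionRieszBasis W) (f : H) :
    ∃! g : ∀ i, W i, HasSum (fun i => (g i : H)) f := by
  obtain ⟨hdense, C, _, hC, _, hriesz⟩ := h
  have hlower := fun J f hf => (hriesz J f hf).1
  obtain ⟨v, rfl⟩ := surjective_synthesis_of_dense hT hC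
    (mul_norm_le_norm_synthesis_of_riesz hT hlower) hdense f
  refine ⟨fun i => v i, hT v, fun g hg => funext fun i => Subtype.ext ?_⟩
  have hdiff := eq_zero_of_hasSum_zero_of_riesz hC hlower
    (fun i => sub_mem (g i).2 (v i).2) (by simpa using hg.sub (hT v)) i
  exact sub_eq_zero.1 hdiff

variable [CompleteSpace H]

lemma adjoint_synthesis_apply (f : H) (i : ι) :
    (T†) f i = (W i).orthogonalProjectionOnto f := by
  classical
  refine ext_inner_right ℂ fun a => ?_
  rw [← lp.inner_single_right, ContinuousLinearMap.adjoint_inner_left, synthesis_single hT,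
    ← Submodule.inner_orthogonalProjectionOnto_eq_of_mem_right]

lemma norm_adjoint_synthesis_sq (f : H) :
    ‖(T†) f‖ ^ 2 = ∑' i, ‖fusionProj (W i) f‖ ^ 2 := by
  rw [(lp.hasSum_norm_sq _).tsum_eq.symm]
  simp_rw [adjoint_synthesis_apply hT]
  rfl

lemma sqrt_mul_norm_le_norm_adjoint_synthesis {A : ℝ} {f : H}
    (h : A * ‖f‖ ^ 2 ≤ ∑' i, ‖fusionProj (W i) f‖ ^ 2) :
    √A * ‖f‖ ≤ ‖(T†) f‖ := by
  rw [← norm_adjoint_synthesis_sq hT] at h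
  simpa [Real.sqrt_mul' A (sq_nonneg ‖f‖)] using Real.sqrt_le_sqrt h

lemma norm_adjoint_synthesis_le {B : ℝ} {f : H}
    (h : ∑' i, ‖fusionProj (W i) f‖ ^ 2 ≤ B * ‖f‖ ^ 2) :
    ‖(T†) f‖ ≤ √B * ‖f‖ := by
  rw [← norm_adjoint_synthesis_sq hT] at h
  simpa [Real.sqrt_mul' B (sq_nonneg ‖f‖)] using Real.sqrt_le_sqrt h

lemma topologicalClosure_iSup_eq_top_of_injective_adjoint
    (h : Function.Injective (T†)) :
    (⨆ i, W i).topologicalClosure = ⊤ := by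
  rw [Submodule.topologicalClosure_eq_top_iff, Submodule.eq_bot_iff]
  intro f hf
  refine (injective_iff_map_eq_zero _).1 h f (lp.ext (funext fun i => ?_))
  rw [adjoint_synthesis_apply hT, lp.coeFn_zero, Pi.zero_apply,
    Submodule.orthogonalProjectionOnto_eq_zero_iff]
  exact Submodule.orthogonal_le (le_iSup W i) hf

end FusionFrame

/-- For a 1-uniform fusion frame `{(W i, 1)}` the following are equivalent:
it is a Riesz decomposition of `H`; the synthesis operator `T_W` is injective;
the analysis operator `T_W*` is surjective; it is a fusion Riesz basis for `H`. -/
theorem fusion_riesz_basis_characterizations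
    {H : Type*} [NormedAddCommGroup H] [InnerProductSpace ℂ H] [CompleteSpace H]
    {ι : Type*} (W : ι → Submodule ℂ H) [∀ i, CompleteSpace (W i)]
    (A B : ℝ) (hA : 0 < A) (hAB : A ≤ B)
    (hframe : ∀ f : H,
      A * ‖f‖ ^ 2 ≤ ∑' i, ‖fusionProj (W i) f‖ ^ 2 ∧
        ∑' i, ‖fusionProj (W i) f‖ ^ 2 ≤ B * ‖f‖ ^ 2)
    (T : lp (fun i => ↥(W i)) 2 →L[ℂ] H)
    (hT : ∀ v : lp (fun i => ↥(W i)) 2, HasSum (fun i => (v i : H)) (T v)) :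
    ((∀ f : H, ∃! g : ∀ i, ↥(W i), HasSum (fun i => (g i : H)) f) ↔
        Function.Injective T) ∧
    (Function.Injective T ↔ Function.Surjective (ContinuousLinearMap.adjoint T)) ∧
    (Function.Surjective (ContinuousLinearMap.adjoint T) ↔ IsFusionRieszBasis W) := by
  have hsA : 0 < √A := Real.sqrt_pos.2 hA
  have hT_adj_below : ∀ f, √A * ‖f‖ ≤ ‖(T†) f‖ := fun f =>
    sqrt_mul_norm_le_norm_adjoint_synthesis hT (hframe f).1
  have hT_norm : ‖T‖ ≤ √B := by
    rw [← ContinuousLinearMap.adjoint.norm_map T]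
    exact ContinuousLinearMap.opNorm_le_bound _ (Real.sqrt_nonneg B) fun f =>
      norm_adjoint_synthesis_le hT (hframe f).2
  have decomp_inj := injective_synthesis_of_existsUnique_hasSum hT
  have riesz_decomp := existsUnique_hasSum_of_isFusionRieszBasis hT
  have inj_surj := ContinuousLinearMap.surjective_adjoint_of_injective hsA hT_adj_below
  have surj_inj := ContinuousLinearMap.injective_of_surjective_adjoint (S := T)
  have surj_riesz (h : Function.Surjective (T†)) : IsFusionRieszBasis W :=
    ⟨topologicalClosure_iSup_eq_top_of_injective_adjoint hT
        ((T†).antilipschitz_of_mul_norm_le hsA hT_adj_below).injective,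
      √A, √B, hsA, Real.sqrt_le_sqrt hAB, riesz_bounds_of_synthesis hT
        (ContinuousLinearMap.mul_norm_le_of_surjective_adjoint hsA hT_adj_below h) hT_norm⟩
  exact ⟨⟨decomp_inj, fun h => riesz_decomp (surj_riesz (inj_surj h))⟩, ⟨inj_surj, surj_inj⟩,
    ⟨surj_riesz, fun h => inj_surj (decomp_inj (riesz_decomp h))⟩⟩
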